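/- For every m ∈ ℕ, every δ ∈ (0,1), and every probability distribution μ on ℕ, with probability at least 1 − δ over an i.i.d. sample X = (X_1,...,X_m) ~ μ^m, we have Φ_m(μ̂_m) ≤ 2·Λ_m(μ) + √(log(1/δ)/m). -/

import Mathlib

open scoped BigOperators

/-- The empirical measure induced by a sample `x` of size `m`:
`μ̂_m(i) = (1/m) ∑_t 1{x_t = i}`. -/
noncomputable def empMeas (m : ℕ) (x : Fin m → ℕ) (i : ℕ) : ℝ :=
  ((Finset.univ.filter (fun t => x t = i)).card : ℝ) / m

/-- Total variation distance `(1/2) ∑_i |μ(i) - ν(i)|`. -/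
noncomputable def tvDist (μ ν : ℕ → ℝ) : ℝ := (1 / 2) * ∑' i, |μ i - ν i|

/-- `Φ_m(ν) = (1/√m) ∑_j √(ν j)`. -/
noncomputable def Phi (m : ℕ) (ν : ℕ → ℝ) : ℝ :=
  (1 / Real.sqrt m) * ∑' j, Real.sqrt (ν j)

/-- `μ` is a probability distribution on ℕ. -/
def IsProb (μ : ℕ → ℝ) : Prop := (∀ i, 0 ≤ μ i) ∧ ∑' i, μ i = 1

/-- Probability of the event `A` under the i.i.d. product `μ^m`. -/
noncomputable def probOf (μ : ℕ → ℝ) (m : ℕ) (A : Set (Fin m → ℕ)) : ℝ :=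
  ∑' x : Fin m → ℕ, Set.indicator A (fun y => ∏ t, μ (y t)) x

/-- Expectation of `f` under the i.i.d. product `μ^m`. -/
noncomputable def expect (μ : ℕ → ℝ) (m : ℕ) (f : (Fin m → ℕ) → ℝ) : ℝ :=
  ∑' x : Fin m → ℕ, (∏ t, μ (x t)) * f x

/-- Empirical Rademacher complexity of the class of all boolean functions on ℕ,
conditional on the sample `x`:
`R̂_m(x) = E_σ [ sup_{f : ℕ → {0,1}} (1/m) ∑_t σ_t f(x_t) ]`,
with `σ` uniform on `{-1,1}^m`. -/
noncomputable def empRad (m : ℕ) (x : Fin m → ℕ) : ℝ :=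
  (1 / 2 ^ m) * ∑ σ : Fin m → Bool,
    sSup (Set.range (fun f : ℕ → Bool =>
      (1 / (m : ℝ)) * ∑ t, (if σ t then (1 : ℝ) else -1) * (if f (x t) then (1 : ℝ) else 0)))

/-- `Λ_m(μ) = ∑_{j : μ(j) < 1/m} μ(j) + (1/(2√m)) ∑_{j : μ(j) ≥ 1/m} √(μ(j))`. -/
noncomputable def Lam (m : ℕ) (μ : ℕ → ℝ) : ℝ :=
  (∑' j, Set.indicator {j | μ j < 1 / (m : ℝ)} μ j)
    + (1 / (2 * Real.sqrt m)) *
      ∑' j, Set.indicator {j | 1 / (m : ℝ) ≤ μ j} (fun j => Real.sqrt (μ j)) j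

/-- The half-norm `‖ν‖_{1/2} = (∑_i √(ν i))²`. -/
noncomputable def hfnrm (ν : ℕ → ℝ) : ℝ := (∑' i, Real.sqrt (ν i)) ^ 2

/-- `T_μ(η)` with respect to a non-increasing rearrangement `π` of `μ`:
the least `t` such that the tail mass beyond the `t` largest atoms is `< η`
(ranks are 0-indexed). -/
noncomputable def truncT (μ : ℕ → ℝ) (π : ℕ ≃ ℕ) (η : ℝ) : ℕ :=
  sInf {t : ℕ | ∑' i, μ (π (i + t)) < η}

/-- The truncation `μ[η]`: keep only the `T_μ(η)` largest atoms of `μ`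
(as ranked by the non-increasing rearrangement `π`). -/
noncomputable def trunc (μ : ℕ → ℝ) (π : ℕ ≃ ℕ) (η : ℝ) (i : ℕ) : ℝ :=
  Set.indicator {i | π.symm i < truncT μ π η} μ i


/-! Let `w(j) = 1` if `μ(j) < 1/m` and `w(j) = 1/(2√(m μ(j)))` otherwise. Then `0 ≤ w ≤ 1` and
`∑ⱼ μ(j) w(j) = Λ_m(μ)`. Applying AM–GM atom by atom, `√c ≤ c · w(j) + (√m/2) √μ(j) 1{μ(j) ≥ 1/m}`
for every count `c`, bounds `Φ_m(μ̂_m)` by the empirical mean `(1/m) ∑ₜ w(Xₜ)` plus the second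
summand of `Λ_m(μ)`, which is at most `Λ_m(μ)`. By Hoeffding's inequality the empirical mean
exceeds `Λ_m(μ) + ε`, `ε = √(log(1/δ)/m)`, with probability at most `exp(-2mε²) = δ² ≤ δ`. -/

open MeasureTheory ProbabilityTheory Real Set

theorem measureReal_sum_sub_integral_ge_le {α ι : Type*} [MeasurableSpace α] [Fintype ι]
    (P : Measure α) [IsProbabilityMeasure P] {f : α → ℝ} (hf : Measurable f)
    (hf01 : ∀ a, f a ∈ Icc 0 1) {ε : ℝ} (hε : 0 ≤ ε) :
    (Measure.pi fun _ : ι => P).real {x | ε ≤ ∑ i, (f (x i) - ∫ a, f a ∂P)}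
      ≤ exp (-2 * ε ^ 2 / Fintype.card ι) := by
  have hindep : iIndepFun (fun i (x : ι → α) => f (x i) - ∫ a, f a ∂P) (Measure.pi fun _ => P) :=
    iIndepFun_pi (X := fun _ a => f a - ∫ a, f a ∂P) fun _ => (hf.sub_const _).aemeasurable
  have hsubG : ∀ i ∈ Finset.univ, HasSubgaussianMGF (fun x : ι → α => f (x i) - ∫ a, f a ∂P)
      ((‖(1 : ℝ) - 0‖₊ / 2) ^ 2) (Measure.pi fun _ => P) := by
    intro i _
    refine HasSubgaussianMGF.of_map (X := fun a => f a - ∫ a, f a ∂P)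
      (measurable_pi_apply i).aemeasurable ?_
    rw [(measurePreserving_eval (fun _ => P) i).map_eq]
    exact hasSubgaussianMGF_of_mem_Icc hf.aemeasurable (ae_of_all _ hf01)
  convert HasSubgaussianMGF.measure_sum_ge_le_of_iIndepFun hindep hsubG hε using 2
  simp only [sub_zero, nnnorm_one, one_div, inv_pow, Finset.sum_const, Finset.card_univ,
    nsmul_eq_mul, NNReal.coe_mul, NNReal.coe_natCast, NNReal.coe_inv, NNReal.coe_pow,
    NNReal.coe_ofNat]
  ring

namespace IsProb

variable {μ : ℕ → ℝ}

theorem summable (hμ : IsProb μ) : Summable μ := by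
  by_contra h
  simpa [tsum_eq_zero_of_not_summable h] using hμ.2

noncomputable def toPMF (hμ : IsProb μ) : PMF ℕ :=
  ⟨fun i => ENNReal.ofReal (μ i), by
    rw [← ENNReal.ofReal_one, ← hμ.2, ENNReal.ofReal_tsum_of_nonneg hμ.1 hμ.summable]
    exact ENNReal.summable.hasSum⟩

@[simp]
theorem toPMF_apply (hμ : IsProb μ) (i : ℕ) : hμ.toPMF i = ENNReal.ofReal (μ i) := rfl

theorem integral_toMeasure_toPMF (hμ : IsProb μ) {f : ℕ → ℝ}
    (hf : Integrable f hμ.toPMF.toMeasure) :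
    ∫ i, f i ∂hμ.toPMF.toMeasure = ∑' i, μ i * f i := by
  rw [PMF.integral_eq_tsum _ _ hf]
  congr 1 with i
  simp [hμ.1 i]

theorem probOf_eq_measureReal (hμ : IsProb μ) (m : ℕ) (A : Set (Fin m → ℕ)) :
    probOf μ m A = (Measure.pi fun _ : Fin m => hμ.toPMF.toMeasure).real A := by
  rw [measureReal_def, ← Measure.tsum_indicator_apply_singleton _ _ .of_discrete,
    ENNReal.tsum_toReal_eq fun x => ne_top_of_le_ne_top (measure_ne_top _ {x})
      (indicator_le_self _ _ x), probOf]
  congr 1 with x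
  by_cases hx : x ∈ A
  · simp [hx, PMF.toMeasure_apply_singleton, ENNReal.toReal_prod, hμ.1]
  · simp [hx]

end IsProb

noncomputable def lamWeight (m : ℕ) (μ : ℕ → ℝ) (i : ℕ) : ℝ :=
  if μ i < 1 / (m : ℝ) then 1 else 1 / (2 * √(m * μ i))

section lamWeight

variable {m : ℕ} {μ : ℕ → ℝ}

theorem one_le_sqrt_natCast_mul (hm : 0 < m) {a : ℝ} (ha : 1 / (m : ℝ) ≤ a) :
    1 ≤ √(m * a) := by
  rw [div_le_iff₀' (by positivity)] at ha
  exact one_le_sqrt.2 ha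

theorem lamWeight_mem_Icc (hm : 0 < m) (i : ℕ) : lamWeight m μ i ∈ Icc 0 1 := by
  unfold lamWeight
  split_ifs with h
  · simp
  · have := one_le_sqrt_natCast_mul hm (not_lt.1 h)
    constructor
    · positivity
    · rw [div_le_one (by positivity)]
      linarith

theorem sqrt_natCast_le_mul_lamWeight_add (hm : 0 < m) (c j : ℕ) :
    √c ≤ c * lamWeight m μ j + √m / 2 * {j | 1 / (m : ℝ) ≤ μ j}.indicator (fun j => √(μ j)) j := by
  unfold lamWeight
  split_ifs with h
  · rw [indicator_of_notMem (by simpa using h)]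
    have : c = 0 ∨ 1 ≤ c := by omega
    simpa using this
  · rw [indicator_of_mem (by simpa using h)]
    set s := √(m * μ j) with hs
    have hs1 : 1 ≤ s := one_le_sqrt_natCast_mul hm (not_lt.1 h)
    have hsm : √m / 2 * √(μ j) = s / 2 := by rw [hs, sqrt_mul (Nat.cast_nonneg m)]; ring
    have hamgm : 2 * s * √c ≤ c + s ^ 2 := by
      nlinarith [sq_nonneg (√c - s), sq_sqrt (Nat.cast_nonneg (α := ℝ) c)]
    rw [hsm, mul_one_div, div_add_div _ _ (by positivity) two_ne_zero, le_div_iff₀ (by positivity)]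
    nlinarith

theorem summable_indicator_sqrt (hm : 0 < m) (hμ : IsProb μ) :
    Summable ({j | 1 / (m : ℝ) ≤ μ j}.indicator fun j => √(μ j)) := by
  refine .of_nonneg_of_le (fun j => indicator_nonneg (fun _ _ => sqrt_nonneg _) j) (fun j => ?_)
    (hμ.summable.mul_left √m)
  by_cases hj : j ∈ {j | 1 / (m : ℝ) ≤ μ j}
  · rw [indicator_of_mem hj]
    calc √(μ j) ≤ √(μ j) * √(m * μ j) :=
          le_mul_of_one_le_right (sqrt_nonneg _) (one_le_sqrt_natCast_mul hm hj)
      _ = √m * μ j := by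
          rw [sqrt_mul (Nat.cast_nonneg m), mul_left_comm, mul_self_sqrt (hμ.1 j)]
  · rw [indicator_of_notMem hj]
    exact mul_nonneg (sqrt_nonneg _) (hμ.1 j)

theorem mul_lamWeight_eq (hm : 0 < m) (i : ℕ) :
    μ i * lamWeight m μ i = {j | μ j < 1 / (m : ℝ)}.indicator μ i
      + 1 / (2 * √m) * {j | 1 / (m : ℝ) ≤ μ j}.indicator (fun j => √(μ j)) i := by
  unfold lamWeight
  split_ifs with h
  · rw [indicator_of_mem (show i ∈ {j | μ j < 1 / (m : ℝ)} from h),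
      indicator_of_notMem (show i ∉ {j | 1 / (m : ℝ) ≤ μ j} by simpa using h), mul_zero,
      add_zero, mul_one]
  · have hμi : 0 < μ i := (by positivity : (0 : ℝ) < 1 / m).trans_le (not_lt.1 h)
    rw [indicator_of_notMem (show i ∉ {j | μ j < 1 / (m : ℝ)} from h),
      indicator_of_mem (show i ∈ {j | 1 / (m : ℝ) ≤ μ j} from not_lt.1 h), zero_add,
      sqrt_mul (Nat.cast_nonneg m)]
    have := mul_self_sqrt hμi.le
    have : 0 < √(μ i) := sqrt_pos.2 hμi
    field_simp
    linarith

theorem tsum_mul_lamWeight (hm : 0 < m) (hμ : IsProb μ) :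
    ∑' i, μ i * lamWeight m μ i = Lam m μ := by
  rw [tsum_congr (mul_lamWeight_eq hm), Summable.tsum_add (hμ.summable.indicator _)
    ((summable_indicator_sqrt hm hμ).mul_left _), tsum_mul_left, Lam]

theorem half_sqrt_mul_tsum_le_mul_Lam (hm : 0 < m) (hμ0 : ∀ i, 0 ≤ μ i) :
    √m / 2 * ∑' j, {j | 1 / (m : ℝ) ≤ μ j}.indicator (fun j => √(μ j)) j ≤ m * Lam m μ := by
  have hlow : 0 ≤ ∑' j, {j | μ j < 1 / (m : ℝ)}.indicator μ j :=
    tsum_nonneg fun j => indicator_nonneg (fun j _ => hμ0 j) j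
  have hsm : √m / 2 = m * (1 / (2 * √m)) := by
    have := mul_self_sqrt (Nat.cast_nonneg (α := ℝ) m)
    have : 0 < √(m : ℝ) := sqrt_pos.2 (by exact_mod_cast hm)
    field_simp
    linarith
  rw [Lam, hsm, mul_assoc, mul_add]
  nlinarith [(by exact_mod_cast hm : (0 : ℝ) < m)]

end lamWeight

section empirical

variable {m : ℕ} {μ : ℕ → ℝ}

theorem natCast_mul_Phi_empMeas (hm : 0 < m) (x : Fin m → ℕ) :
    m * Phi m (empMeas m x)
      = ∑ j ∈ Finset.univ.image x, √((Finset.univ.filter fun t => x t = j).card : ℝ) := by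
  have hm' : (0 : ℝ) < m := by exact_mod_cast hm
  have hvanish : ∀ j ∉ Finset.univ.image x, √(empMeas m x j) = 0 := by
    intro j hj
    simp_all [empMeas]
  rw [Phi, tsum_eq_sum hvanish, ← mul_assoc, Finset.mul_sum]
  refine Finset.sum_congr rfl fun j _ => ?_
  rw [empMeas, sqrt_div (Nat.cast_nonneg _)]
  have : 0 < √(m : ℝ) := sqrt_pos.2 hm'
  field_simp
  rw [sq_sqrt hm'.le]

theorem natCast_mul_Phi_empMeas_le (hm : 0 < m) (hμ : IsProb μ) (x : Fin m → ℕ) :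
    m * Phi m (empMeas m x) ≤ ∑ t, lamWeight m μ (x t)
      + √m / 2 * ∑' j, {j | 1 / (m : ℝ) ≤ μ j}.indicator (fun j => √(μ j)) j := by
  classical
  set H := {j | 1 / (m : ℝ) ≤ μ j}
  rw [natCast_mul_Phi_empMeas hm, Finset.sum_comp (fun j => lamWeight m μ j)]
  calc _ ≤ ∑ j ∈ Finset.univ.image x, ((Finset.univ.filter fun t => x t = j).card
          * lamWeight m μ j + √m / 2 * H.indicator (fun j => √(μ j)) j) :=
        Finset.sum_le_sum fun j _ => sqrt_natCast_le_mul_lamWeight_add hm _ j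
    _ ≤ _ := by
      rw [Finset.sum_add_distrib, ← Finset.mul_sum]
      gcongr with j
      · simp
      · exact Summable.sum_le_tsum _ (fun j _ => indicator_nonneg (fun _ _ => sqrt_nonneg _) j)
          (summable_indicator_sqrt hm hμ)

theorem Phi_empMeas_le_two_mul_Lam_add (hm : 0 < m) (hμ : IsProb μ) {x : Fin m → ℕ} {ε : ℝ}
    (hx : ∑ t, (lamWeight m μ (x t) - Lam m μ) < m * ε) :
    Phi m (empMeas m x) ≤ 2 * Lam m μ + ε := by
  have hm' : (0 : ℝ) < m := by exact_mod_cast hm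
  rw [Finset.sum_sub_distrib, Finset.sum_const, Finset.card_univ, Fintype.card_fin,
    nsmul_eq_mul] at hx
  have := natCast_mul_Phi_empMeas_le hm hμ x
  have := half_sqrt_mul_tsum_le_mul_Lam hm hμ.1
  refine le_of_mul_le_mul_left ?_ hm'
  linarith

end empirical

/-- For every `m ∈ ℕ`, `δ ∈ (0,1)` and probability distribution `μ` on ℕ,
with probability at least `1 - δ` over `X ~ μ^m`,
`Φ_m(μ̂_m) ≤ 2 Λ_m(μ) + √(log(1/δ)/m)`. -/
theorem Phi_le_two_Lam_high_prob (m : ℕ) (hm : 0 < m) (δ : ℝ) (hδ0 : 0 < δ) (hδ1 : δ < 1)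
    (μ : ℕ → ℝ) (hμ : IsProb μ) :
    1 - δ ≤ probOf μ m {x |
      Phi m (empMeas m x) ≤ 2 * Lam m μ + Real.sqrt (Real.log (1 / δ) / m)} := by
  set ε := √(log (1 / δ) / m)
  have hm' : (0 : ℝ) < m := by exact_mod_cast hm
  have hlog : 0 ≤ log (1 / δ) := log_nonneg (one_le_one_div hδ0 hδ1.le)
  have hε : -2 * (m * ε) ^ 2 / m = log (δ ^ 2) := by
    rw [mul_pow, sq_sqrt (div_nonneg hlog hm'.le), one_div, log_inv, log_pow]
    field_simp
    push_cast
    ring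
  set ν := Measure.pi fun _ : Fin m => hμ.toPMF.toMeasure
  set bad := {x : Fin m → ℕ | m * ε ≤ ∑ t, (lamWeight m μ (x t) - Lam m μ)}
  have hbad : ν.real bad ≤ δ := by
    have hmean : ∫ i, lamWeight m μ i ∂hμ.toPMF.toMeasure = Lam m μ := by
      rw [hμ.integral_toMeasure_toPMF (.of_mem_Icc 0 1 Measurable.of_discrete.aemeasurable
        (ae_of_all _ (lamWeight_mem_Icc hm))), tsum_mul_lamWeight hm hμ]
    calc ν.real bad ≤ exp (-2 * (m * ε) ^ 2 / m) := by
          have := measureReal_sum_sub_integral_ge_le (ι := Fin m) hμ.toPMF.toMeasure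
            (Measurable.of_discrete (f := lamWeight m μ)) (lamWeight_mem_Icc hm)
            (by positivity : 0 ≤ m * ε)
          rwa [hmean, Fintype.card_fin] at this
      _ = δ ^ 2 := by rw [hε, exp_log (by positivity)]
      _ ≤ δ := by nlinarith
  rw [hμ.probOf_eq_measureReal]
  calc 1 - δ ≤ 1 - ν.real bad := by linarith
    _ = ν.real badᶜ := (probReal_compl_eq_one_sub .of_discrete).symm
    _ ≤ _ := measureReal_mono fun x hx => Phi_empMeas_le_two_mul_Lam_add hm hμ (not_le.1 hx)
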